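/- arXiv:1208.2302 — 4 statements merged into one kernel-verified Lean document; each statement's English description precedes it below -/
import Mathlib

section
/- For any 0 < γ < n−1 with n ≥ 2, any radial integrable function f on ℝ^n, and any x ≠ 0, the convolution satisfies ∫ |x−y|^{−γ} |f(y)| dy ≤ C |x|^{−γ} ‖f‖_{L¹}, where C depends only on n and γ. -/
/-!
Write `R = ‖x‖` and `F = |f|`. Radial symmetry gives the mass bound
`∫_{B(x,δ)} F ≤ (2δ/R)^(n-1) ‖F‖₁` for `δ ≤ R`: every point `z` of the annulus
`R - δ < |z| < R + δ` has a rotated copy of `B(x,δ)` inside `B(z,2δ)`, so averaging over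
the annulus (of volume `≳ δ R^(n-1)`) and applying Tonelli bounds the mass by
`|B(2δ)| ‖F‖₁ / |annulus|`.
Splitting `ℝⁿ` into the region `|x - y| ≥ R` and the dyadic shells
`R/2^(k+1) < |x - y| ≤ R/2^k`, shell `k` contributes `≲ R^(-γ) 2^(k(γ-(n-1))) ‖F‖₁`,
a geometric series because `γ < n - 1`.
-/

open MeasureTheory Metric Set
open scoped ENNReal

theorem sub_mul_pow_le_pow_succ_sub_pow_succ {a b : ℝ} (hb : 0 ≤ b) (hba : b ≤ a) (m : ℕ) :
    (a - b) * a ^ m ≤ a ^ (m + 1) - b ^ (m + 1) := by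
  have : b ^ m ≤ a ^ m := pow_le_pow_left₀ hb hba m
  have : b * b ^ m ≤ b * a ^ m := mul_le_mul_of_nonneg_left this hb
  rw [pow_succ', pow_succ']
  nlinarith

section AddHaar

variable {E : Type*} [NormedAddCommGroup E] [NormedSpace ℝ E] [FiniteDimensional ℝ E]
  [MeasurableSpace E] [BorelSpace E] (μ : Measure E) [μ.IsAddHaarMeasure]

theorem lintegral_setLIntegral_closedBall {F : E → ℝ≥0∞} (hF : AEMeasurable F μ) (r : ℝ) :
    ∫⁻ x, ∫⁻ y in closedBall x r, F y ∂μ ∂μ = μ (closedBall 0 r) * ∫⁻ y, F y ∂μ := by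
  have hS : MeasurableSet {p : E × E | dist p.2 p.1 ≤ r} :=
    (isClosed_le (by fun_prop) continuous_const).measurableSet
  calc ∫⁻ x, ∫⁻ y in closedBall x r, F y ∂μ ∂μ
      = ∫⁻ x, ∫⁻ y, (closedBall x r).indicator F y ∂μ ∂μ := by
        simp_rw [lintegral_indicator measurableSet_closedBall]
    _ = ∫⁻ y, ∫⁻ x, (closedBall y r).indicator (fun _ => F y) x ∂μ ∂μ := by
        rw [lintegral_lintegral_swap (f := fun x y => (closedBall x r).indicator F y)
          ((hF.comp_snd).indicator hS)]
        congr! 3 with y x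
        simp only [indicator, mem_closedBall, dist_comm]
    _ = ∫⁻ y, μ (closedBall 0 r) * F y ∂μ := by
        simp_rw [lintegral_indicator_const measurableSet_closedBall,
          μ.addHaar_closedBall_center, mul_comm]
    _ = μ (closedBall 0 r) * ∫⁻ y, F y ∂μ :=
        lintegral_const_mul' _ _ measure_closedBall_lt_top.ne

theorem ofReal_mul_measure_ball_le_measure_annulus {m : ℕ} (hE : Module.finrank ℝ E = m + 1)
    {R δ : ℝ} (hδ : 0 < δ) (hδR : δ ≤ R) :
    ENNReal.ofReal (2 * δ * R ^ m) * μ (ball 0 1) ≤ μ (ball 0 (R + δ) \ closedBall 0 (R - δ)) := by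
  rw [measure_sdiff (closedBall_subset_ball (by linarith))
      measurableSet_closedBall.nullMeasurableSet measure_closedBall_lt_top.ne,
    μ.addHaar_ball_of_pos 0 (r := R + δ) (by linarith), μ.addHaar_closedBall 0 (by linarith), hE,
    ← ENNReal.sub_mul fun _ _ => measure_ball_lt_top.ne,
    ← ENNReal.ofReal_sub _ (pow_nonneg (by linarith) _)]
  gcongr
  calc 2 * δ * R ^ m ≤ (R + δ - (R - δ)) * (R + δ) ^ m := by
        rw [show R + δ - (R - δ) = 2 * δ by ring]
        gcongr <;> linarith
    _ ≤ _ := sub_mul_pow_le_pow_succ_sub_pow_succ (by linarith) (by linarith) m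

end AddHaar

theorem rpow_neg_div_two_pow_succ_mul {R : ℝ} (hR : 0 < R) (γ s A : ℝ) (k : ℕ) :
    (R / 2 ^ (k + 1)) ^ (-γ) * (A * (R / 2 ^ k / R) ^ s) =
      R ^ (-γ) * 2 ^ γ * A * ((2 : ℝ) ^ (γ - s)) ^ k := by
  rw [div_div_cancel_left' hR.ne', ← inv_pow, ← Real.rpow_pow_comm (by norm_num),
    Real.div_rpow hR.le (by positivity), Real.rpow_neg (x := 2 ^ (k + 1)) (by positivity),
    div_inv_eq_mul,
    ← Real.rpow_pow_comm (by norm_num), Real.inv_rpow (by norm_num),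
    Real.rpow_sub (by norm_num)]
  ring

section Potential

variable {X : Type*} [PseudoMetricSpace X]

-- `0 ^ (-γ) = 0`, so the centre `y = x` needs no shell of its own
theorem ofReal_rpow_neg_dist_le_add_tsum_indicator (x y : X) {R γ : ℝ} (hR : 0 < R)
    (hγ : 0 < γ) :
    ENNReal.ofReal (dist x y ^ (-γ)) ≤ ENNReal.ofReal (R ^ (-γ)) +
      ∑' k : ℕ, (closedBall x (R / 2 ^ k)).indicator
        (fun _ => ENNReal.ofReal ((R / 2 ^ (k + 1)) ^ (-γ))) y := by
  rcases (dist_nonneg (x := x) (y := y)).eq_or_lt with h0 | hpos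
  · rw [← h0, Real.zero_rpow (neg_ne_zero.mpr hγ.ne'), ENNReal.ofReal_zero]
    exact zero_le
  rcases le_or_gt R (dist x y) with hfar | hnear
  · exact le_add_right (ENNReal.ofReal_le_ofReal
      (Real.rpow_le_rpow_of_nonpos hR hfar (by linarith)))
  obtain ⟨k, hk, hk'⟩ := exists_nat_pow_near ((one_le_div hpos).mpr hnear.le) one_lt_two
  refine le_add_left (le_trans ?_ (ENNReal.le_tsum k))
  rw [indicator_of_mem (mem_closedBall'.mpr ((le_div_comm₀ (by positivity) hpos).mp hk))]
  exact ENNReal.ofReal_le_ofReal (Real.rpow_le_rpow_of_nonpos (by positivity)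
    ((div_lt_comm₀ hpos (by positivity)).mp hk').le (by linarith))

variable [MeasurableSpace X] [OpensMeasurableSpace X]

theorem lintegral_rpow_neg_dist_le_of_measure_closedBall_le (ν : Measure X) (x : X)
    {A R γ s : ℝ} (hA : 0 ≤ A) (hR : 0 < R) (hγ : 0 < γ) (hγs : γ < s)
    (hball : ∀ r, 0 < r → r ≤ R → ν (closedBall x r) ≤ ENNReal.ofReal (A * (r / R) ^ s) * ν univ) :
    ∫⁻ y, ENNReal.ofReal (dist x y ^ (-γ)) ∂ν ≤
      ENNReal.ofReal ((1 + 2 ^ γ * A / (1 - 2 ^ (γ - s))) * R ^ (-γ)) * ν univ := by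
  set ρ : ℝ := 2 ^ (γ - s)
  have hρ : ρ < 1 := Real.rpow_lt_one_of_one_lt_of_neg one_lt_two (by linarith)
  have hsum : ∑' k : ℕ, ENNReal.ofReal (R ^ (-γ) * 2 ^ γ * A * ρ ^ k) =
      ENNReal.ofReal (R ^ (-γ) * 2 ^ γ * A / (1 - ρ)) := by
    rw [← ENNReal.ofReal_tsum_of_nonneg (fun k => by positivity)
      ((summable_geometric_of_lt_one (by positivity) hρ).mul_left _),
      tsum_mul_left, tsum_geometric_of_lt_one (by positivity) hρ, div_eq_mul_inv]
  calc ∫⁻ y, ENNReal.ofReal (dist x y ^ (-γ)) ∂ν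
      ≤ ∫⁻ y, ENNReal.ofReal (R ^ (-γ)) + ∑' k : ℕ, (closedBall x (R / 2 ^ k)).indicator
          (fun _ => ENNReal.ofReal ((R / 2 ^ (k + 1)) ^ (-γ))) y ∂ν :=
        lintegral_mono fun y => ofReal_rpow_neg_dist_le_add_tsum_indicator x y hR hγ
    _ = ENNReal.ofReal (R ^ (-γ)) * ν univ +
          ∑' k : ℕ, ENNReal.ofReal ((R / 2 ^ (k + 1)) ^ (-γ)) * ν (closedBall x (R / 2 ^ k)) := by
        rw [lintegral_add_left measurable_const, lintegral_const,
          lintegral_tsum fun k => (aemeasurable_const.indicator measurableSet_closedBall)]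
        simp_rw [lintegral_indicator_const measurableSet_closedBall]
    _ ≤ ENNReal.ofReal (R ^ (-γ)) * ν univ +
          ∑' k : ℕ, ENNReal.ofReal (R ^ (-γ) * 2 ^ γ * A * ρ ^ k) * ν univ := by
        gcongr ENNReal.ofReal (R ^ (-γ)) * ν univ + ∑' k, ?_ with k
        calc _ ≤ ENNReal.ofReal ((R / 2 ^ (k + 1)) ^ (-γ)) *
              (ENNReal.ofReal (A * (R / 2 ^ k / R) ^ s) * ν univ) := by
              gcongr
              exact hball _ (by positivity) (div_le_self hR.le (one_le_pow₀ one_le_two))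
          _ = _ := by
              rw [← mul_assoc, ← ENNReal.ofReal_mul (by positivity),
                rpow_neg_div_two_pow_succ_mul hR]
    _ = _ := by
        rw [ENNReal.tsum_mul_right, hsum, ← add_mul, ← ENNReal.ofReal_add (by positivity)
          (by positivity)]
        congr 2
        ring

end Potential

section Radial

variable {E : Type*} [NormedAddCommGroup E] [InnerProductSpace ℝ E] [FiniteDimensional ℝ E]
  [MeasurableSpace E] [BorelSpace E] {F : E → ℝ≥0∞}

/-- A reflection maps `a` to `b`, fixes `F` and preserves volume. -/
theorem setLIntegral_closedBall_eq_of_norm_eq (hrad : ∀ x y : E, ‖x‖ = ‖y‖ → F x = F y)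
    {a b : E} (hab : ‖a‖ = ‖b‖) (r : ℝ) :
    ∫⁻ y in closedBall a r, F y = ∫⁻ y in closedBall b r, F y := by
  set e : E ≃ₗᵢ[ℝ] E := (ℝ ∙ (a - b))ᗮ.reflection
  have hea : e a = b := Submodule.reflection_sub hab
  have hpre : e ⁻¹' closedBall b r = closedBall a r := by
    rw [LinearIsometryEquiv.preimage_closedBall, ← hea, e.symm_apply_apply]
  calc ∫⁻ y in closedBall a r, F y = ∫⁻ y in e ⁻¹' closedBall b r, F (e y) := by
        rw [hpre]
        exact setLIntegral_congr_fun measurableSet_closedBall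
          fun y _ => hrad _ _ (e.norm_map y).symm
    _ = ∫⁻ y in closedBall b r, F y :=
        e.measurePreserving.setLIntegral_comp_preimage_emb
          e.toHomeomorph.measurableEmbedding F _

theorem setLIntegral_closedBall_le_of_abs_norm_sub_lt (hrad : ∀ x y : E, ‖x‖ = ‖y‖ → F x = F y)
    {x z : E} (hx : x ≠ 0) {δ : ℝ} (hz : |‖x‖ - ‖z‖| < δ) :
    ∫⁻ y in closedBall x δ, F y ≤ ∫⁻ y in closedBall z (2 * δ), F y := by
  have hx' : 0 < ‖x‖ := norm_pos_iff.mpr hx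
  set c : ℝ := ‖z‖ / ‖x‖
  have hnorm : ‖c • x‖ = ‖z‖ := by
    rw [norm_smul, Real.norm_of_nonneg (by positivity), div_mul_cancel₀ _ hx'.ne']
  have hdist : dist x (c • x) = |‖x‖ - ‖z‖| := by
    rw [dist_eq_norm, show x - c • x = (1 - c) • x by rw [sub_smul, one_smul], norm_smul,
      Real.norm_eq_abs, ← abs_of_pos hx', ← abs_mul, abs_of_pos hx', sub_mul, one_mul,
      div_mul_cancel₀ _ hx'.ne']
  calc ∫⁻ y in closedBall x δ, F y ≤ ∫⁻ y in closedBall (c • x) (2 * δ), F y :=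
        lintegral_mono_set (closedBall_subset_closedBall' (by rw [hdist]; linarith))
    _ = ∫⁻ y in closedBall z (2 * δ), F y := setLIntegral_closedBall_eq_of_norm_eq hrad hnorm _

theorem setLIntegral_closedBall_le_of_radial {m : ℕ} (hE : Module.finrank ℝ E = m + 1)
    (hF : AEMeasurable F) (hrad : ∀ x y : E, ‖x‖ = ‖y‖ → F x = F y) {x : E} {δ : ℝ}
    (hδ : 0 < δ) (hδx : δ ≤ ‖x‖) :
    ∫⁻ y in closedBall x δ, F y ≤ ENNReal.ofReal ((2 * δ / ‖x‖) ^ m) * ∫⁻ y, F y := by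
  set R := ‖x‖
  have hR : 0 < R := hδ.trans_le hδx
  set W : Set E := ball 0 (R + δ) \ closedBall 0 (R - δ)
  have hω : volume (ball (0 : E) 1) ≠ 0 := (measure_ball_pos volume 0 one_pos).ne'
  have hW : ∀ z ∈ W, ∫⁻ y in closedBall x δ, F y ≤ ∫⁻ y in closedBall z (2 * δ), F y := by
    rintro z ⟨hz₁, hz₂⟩
    rw [mem_ball_zero_iff] at hz₁
    rw [mem_closedBall_zero_iff, not_le] at hz₂
    exact setLIntegral_closedBall_le_of_abs_norm_sub_lt hrad (norm_pos_iff.mp hR)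
      (abs_sub_lt_iff.mpr ⟨by linarith, by linarith⟩)
  have hpow : (2 * δ) ^ (m + 1) = 2 * δ * R ^ m * (2 * δ / R) ^ m := by
    rw [div_pow, pow_succ']
    field_simp
  have key : ENNReal.ofReal (2 * δ * R ^ m) * volume (ball (0 : E) 1) *
      ∫⁻ y in closedBall x δ, F y ≤ ENNReal.ofReal (2 * δ * R ^ m) * volume (ball (0 : E) 1) *
      (ENNReal.ofReal ((2 * δ / R) ^ m) * ∫⁻ y, F y) :=
    calc _ ≤ volume W * ∫⁻ y in closedBall x δ, F y := by
          gcongr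
          exact ofReal_mul_measure_ball_le_measure_annulus volume hE hδ hδx
      _ = ∫⁻ _ in W, ∫⁻ y in closedBall x δ, F y := by rw [setLIntegral_const, mul_comm]
      _ ≤ ∫⁻ z in W, ∫⁻ y in closedBall z (2 * δ), F y :=
          setLIntegral_mono' (measurableSet_ball.diff measurableSet_closedBall) hW
      _ ≤ ∫⁻ z, ∫⁻ y in closedBall z (2 * δ), F y := setLIntegral_le_lintegral _ _
      _ = _ := by
          rw [lintegral_setLIntegral_closedBall volume hF,
            volume.addHaar_closedBall 0 (by positivity), hE, hpow,
            ENNReal.ofReal_mul (by positivity)]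
          ring
  refine (ENNReal.mul_le_mul_iff_right (mul_ne_zero ?_ hω) ?_).mp key
  · exact (ENNReal.ofReal_pos.mpr (by positivity)).ne'
  · exact ENNReal.mul_ne_top ENNReal.ofReal_ne_top measure_ball_lt_top.ne

theorem lintegral_rpow_neg_norm_sub_mul_le_of_radial {m : ℕ} (hE : Module.finrank ℝ E = m + 1)
    (hF : AEMeasurable F) (hrad : ∀ x y : E, ‖x‖ = ‖y‖ → F x = F y) {γ : ℝ} (hγ : 0 < γ)
    (hγm : γ < m) {x : E} (hx : x ≠ 0) :
    ∫⁻ y, ENNReal.ofReal (‖x - y‖ ^ (-γ)) * F y ≤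
      ENNReal.ofReal ((1 + 2 ^ γ * 2 ^ m / (1 - 2 ^ (γ - m))) * ‖x‖ ^ (-γ)) * ∫⁻ y, F y := by
  have key := lintegral_rpow_neg_dist_le_of_measure_closedBall_le (volume.withDensity F) x
    (A := 2 ^ m) (s := m) (by positivity) (norm_pos_iff.mpr hx) hγ hγm fun r hr hrx => by
      rw [withDensity_apply F measurableSet_closedBall, withDensity_apply F MeasurableSet.univ,
        Measure.restrict_univ, Real.rpow_natCast, ← mul_pow, ← mul_div_assoc]
      exact setLIntegral_closedBall_le_of_radial hE hF hrad hr hrx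
  rw [withDensity_apply F MeasurableSet.univ, Measure.restrict_univ,
    lintegral_withDensity_eq_lintegral_mul₀ hF (by fun_prop)] at key
  simpa only [dist_eq_norm, Pi.mul_apply, mul_comm] using key

end Radial

theorem weighted_convolution_radial_general (n : ℕ) (γ : ℝ) (hγ : 0 < γ)
    (hγn : γ < (n : ℝ) - 1) :
    ∃ C > 0, ∀ f : EuclideanSpace ℝ (Fin n) → ℝ,
      Integrable f →
      (∀ x y : EuclideanSpace ℝ (Fin n), ‖x‖ = ‖y‖ → f x = f y) →
      ∀ x : EuclideanSpace ℝ (Fin n), x ≠ 0 →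
        (∫ y, ‖x - y‖ ^ (-γ) * |f y|) ≤ C * ‖x‖ ^ (-γ) * ∫ y, |f y| := by
  obtain ⟨m, rfl⟩ : ∃ m, n = m + 1 :=
    ⟨n - 1, by have : 1 < n := (by exact_mod_cast (by linarith : (1 : ℝ) < n)); omega⟩
  have hγm : γ < m := by push_cast at hγn; linarith
  have hρ : (2 : ℝ) ^ (γ - m) < 1 := Real.rpow_lt_one_of_one_lt_of_neg one_lt_two (by linarith)
  refine ⟨1 + 2 ^ γ * 2 ^ m / (1 - 2 ^ (γ - m)), by have := sub_pos.mpr hρ; positivity,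
    fun f hf hrad x hx => ?_⟩
  have key := lintegral_rpow_neg_norm_sub_mul_le_of_radial finrank_euclideanSpace_fin
    hf.aemeasurable.abs.ennreal_ofReal (fun a b h => by rw [hrad a b h]) hγ hγm hx
  have hmeas : Measurable fun y => ‖x - y‖ ^ (-γ) := by fun_prop
  rw [integral_eq_lintegral_of_nonneg_ae (f := fun y => ‖x - y‖ ^ (-γ) * |f y|)
      (.of_forall fun y => by positivity) (hmeas.aestronglyMeasurable.mul hf.abs.1),
    integral_eq_lintegral_of_nonneg_ae (.of_forall fun y => by positivity) hf.abs.1,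
    ← ENNReal.toReal_ofReal (by positivity : 0 ≤ _ * ‖x‖ ^ (-γ)), ← ENNReal.toReal_mul]
  refine ENNReal.toReal_mono
    (ENNReal.mul_ne_top ENNReal.ofReal_ne_top hf.abs.lintegral_lt_top.ne) ?_
  simpa only [ENNReal.ofReal_mul (Real.rpow_nonneg (norm_nonneg _) _)] using key

/-- Weighted convolution estimate for radial integrable functions:
for `0 < γ < n-1`, `n ≥ 2`, there is `C > 0` (depending only on `n, γ`) such that
for every radial `f ∈ L¹(ℝⁿ)` and every `x ≠ 0`,
`∫ |x-y|^{-γ} |f(y)| dy ≤ C |x|^{-γ} ‖f‖_{L¹}`. -/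
theorem weighted_convolution_radial (n : ℕ) (hn : 2 ≤ n) (γ : ℝ) (hγ : 0 < γ)
    (hγn : γ < (n : ℝ) - 1) :
    ∃ C > 0, ∀ f : EuclideanSpace ℝ (Fin n) → ℝ,
      Integrable f →
      (∀ x y : EuclideanSpace ℝ (Fin n), ‖x‖ = ‖y‖ → f x = f y) →
      ∀ x : EuclideanSpace ℝ (Fin n), x ≠ 0 →
        (∫ y, ‖x - y‖ ^ (-γ) * |f y|) ≤ C * ‖x‖ ^ (-γ) * ∫ y, |f y| :=
  weighted_convolution_radial_general n γ hγ hγn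
end

section
/- (Stein–Weiss inequality, L² case) Let n ≥ 1, 0 < λ < n, 0 < β < n/2, and λ + β = n. Then for all f ∈ L²(ℝ^n), ‖ |x|^{−β} (|·|^{−λ} * f) ‖_{L²} ≤ C ‖f‖_{L²}, with C depending only on n, λ, β. -/
/-!
Schur's test with the weight `‖y‖ ^ (-n/2)` for the kernel `‖x‖ ^ (-β) * ‖x - y‖ ^ (-λ)`.
Both Schur conditions reduce, using `λ + β = n`, to the composition estimate
`∫ ‖y‖ ^ (-a) * ‖x - y‖ ^ (-b) dy ≤ C * ‖x‖ ^ (n - a - b)` for `a, b < n < a + b`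
(with `a = n/2` and `a = β + n/2`, `b = λ`; here `β < n/2` gives `n/2 + λ > n`).
By homogeneity it suffices to bound that integral for `‖x‖ = 1`, where it is finite because the
singularities at `0` and `x` are locally integrable (`a, b < n`) and the tail decays like
`‖y‖ ^ (-(a + b))`.
-/

open MeasureTheory Metric Set Module
open scoped ENNReal NNReal

theorem setLIntegral_le_mul_setLIntegral {α : Type*} [MeasurableSpace α] {μ : Measure α}
    {s t : Set α} (hs : MeasurableSet s) (hst : s ⊆ t) {f g : α → ℝ≥0∞} {c : ℝ≥0∞}
    (hc : c ≠ ∞) (hfg : ∀ y ∈ s, f y ≤ c * g y) :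
    ∫⁻ y in s, f y ∂μ ≤ c * ∫⁻ y in t, g y ∂μ :=
  calc ∫⁻ y in s, f y ∂μ ≤ ∫⁻ y in s, c * g y ∂μ := setLIntegral_mono' hs hfg
    _ = c * ∫⁻ y in s, g y ∂μ := lintegral_const_mul' c _ hc
    _ ≤ c * ∫⁻ y in t, g y ∂μ := by gcongr

theorem lintegral_le_setLIntegral_add_setLIntegral_add_diff {α : Type*} [MeasurableSpace α]
    (μ : Measure α) {s : Set α} (hs : MeasurableSet s) (t : Set α) (f : α → ℝ≥0∞) :
    ∫⁻ y, f y ∂μ ≤ ∫⁻ y in s, f y ∂μ + (∫⁻ y in t, f y ∂μ + ∫⁻ y in sᶜ \ t, f y ∂μ) := by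
  have h_cover : sᶜ ⊆ t ∪ sᶜ \ t := by
    rw [union_sdiff_self]
    exact subset_union_right
  rw [← lintegral_add_compl f hs]
  gcongr
  exact (lintegral_mono_set h_cover).trans (lintegral_union_le f t (sᶜ \ t))

theorem setLIntegral_ball_comp_sub_left {G : Type*} [NormedAddCommGroup G] [MeasurableSpace G]
    [BorelSpace G] (μ : Measure G) [μ.IsAddLeftInvariant] [μ.IsNegInvariant] {g : G → ℝ≥0∞}
    (hg : Measurable g) (x : G) (r : ℝ) :
    ∫⁻ y in ball x r, g (x - y) ∂μ = ∫⁻ u in ball 0 r, g u ∂μ := by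
  have h_preimage : (fun y ↦ x - y) ⁻¹' ball (0 : G) r = ball x r := by
    ext y
    simp [dist_eq_norm, norm_sub_rev]
  rw [← h_preimage]
  exact (μ.measurePreserving_sub_left x).setLIntegral_comp_preimage measurableSet_ball hg

theorem Real.rpow_neg_le_of_inv_mul_le {s c u v : ℝ} (hs : 0 ≤ s) (hc : 0 < c) (hv : 0 < v)
    (h : c⁻¹ * v ≤ u) : u ^ (-s) ≤ c ^ s * v ^ (-s) :=
  calc u ^ (-s) ≤ (c⁻¹ * v) ^ (-s) := Real.rpow_le_rpow_of_nonpos (by positivity) h (by linarith)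
    _ = c ^ s * v ^ (-s) := by
      rw [Real.mul_rpow (by positivity) hv.le, Real.inv_rpow hc.le, Real.rpow_neg hc.le, inv_inv]

theorem enorm_mul_integral_mul_le {α : Type*} [MeasurableSpace α] {μ : Measure α} {c : ℝ}
    (hc : 0 ≤ c) {k f : α → ℝ} (hk : ∀ y, 0 ≤ k y) :
    ‖c * ∫ y, k y * f y ∂μ‖ₑ ≤ ∫⁻ y, ENNReal.ofReal c * ENNReal.ofReal (k y) * ‖f y‖ₑ ∂μ := by
  rw [enorm_mul, Real.enorm_of_nonneg hc]
  calc ENNReal.ofReal c * ‖∫ y, k y * f y ∂μ‖ₑ ≤ ENNReal.ofReal c * ∫⁻ y, ‖k y * f y‖ₑ ∂μ := by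
        gcongr
        exact enorm_integral_le_lintegral_enorm _
    _ = ∫⁻ y, ENNReal.ofReal c * ENNReal.ofReal (k y) * ‖f y‖ₑ ∂μ := by
        rw [← lintegral_const_mul' _ _ ENNReal.ofReal_ne_top]
        refine lintegral_congr fun y ↦ ?_
        rw [enorm_mul, Real.enorm_of_nonneg (hk y), mul_assoc]

section SchurTest

variable {α β : Type*} [MeasurableSpace α] [MeasurableSpace β] {μ : Measure α} {ν : Measure β}

theorem sq_lintegral_mul_le_weighted {k f p : β → ℝ≥0∞} (hk : AEMeasurable k ν)
    (hf : AEMeasurable f ν) (hp : AEMeasurable p ν) (hp0 : ∀ᵐ y ∂ν, p y ≠ 0)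
    (hp_top : ∀ᵐ y ∂ν, p y ≠ ∞) :
    (∫⁻ y, k y * f y ∂ν) ^ 2 ≤ (∫⁻ y, k y * p y ∂ν) * ∫⁻ y, k y * ((p y)⁻¹ * f y ^ 2) ∂ν := by
  have h_split : ∀ᵐ y ∂ν, k y * f y
      = (k y * p y) ^ (2⁻¹ : ℝ) * (k y * ((p y)⁻¹ * f y ^ 2)) ^ (2⁻¹ : ℝ) := by
    filter_upwards [hp0, hp_top] with y hy0 hy_top
    rw [← ENNReal.mul_rpow_of_nonneg _ _ (by norm_num),
      show k y * p y * (k y * ((p y)⁻¹ * f y ^ 2)) = (k y * f y) ^ 2 * (p y * (p y)⁻¹) by ring,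
      ENNReal.mul_inv_cancel hy0 hy_top, mul_one]
    simpa using (ENNReal.pow_rpow_inv_natCast two_ne_zero (k y * f y)).symm
  calc (∫⁻ y, k y * f y ∂ν) ^ 2
      ≤ ((∫⁻ y, k y * p y ∂ν) ^ (2⁻¹ : ℝ) *
          (∫⁻ y, k y * ((p y)⁻¹ * f y ^ 2) ∂ν) ^ (2⁻¹ : ℝ)) ^ 2 := by
        rw [lintegral_congr_ae h_split]
        gcongr
        exact ENNReal.lintegral_mul_norm_pow_le (hk.mul hp) (hk.mul (hp.inv.mul (hf.pow_const 2)))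
          (by norm_num) (by norm_num) (by norm_num)
    _ = _ := by
        rw [mul_pow]
        simp only [← ENNReal.rpow_natCast, ← ENNReal.rpow_mul]
        norm_num

theorem lintegral_sq_lintegral_le_of_schur [SFinite μ] [SFinite ν] {K : α → β → ℝ≥0∞}
    (hK : Measurable (Function.uncurry K)) {p : β → ℝ≥0∞} {q : α → ℝ≥0∞} (hp : Measurable p)
    (hq : Measurable q) (hp0 : ∀ᵐ y ∂ν, p y ≠ 0) (hp_top : ∀ᵐ y ∂ν, p y ≠ ∞) {A B : ℝ≥0∞}
    (hA : ∀ᵐ x ∂μ, ∫⁻ y, K x y * p y ∂ν ≤ A * q x)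
    (hB : ∀ᵐ y ∂ν, ∫⁻ x, K x y * q x ∂μ ≤ B * p y) {f : β → ℝ≥0∞} (hf : AEMeasurable f ν) :
    ∫⁻ x, (∫⁻ y, K x y * f y ∂ν) ^ 2 ∂μ ≤ A * B * ∫⁻ y, f y ^ 2 ∂ν := by
  set g : β → ℝ≥0∞ := fun y ↦ (p y)⁻¹ * f y ^ 2
  have hg : AEMeasurable g ν := hp.inv.aemeasurable.mul (hf.pow_const 2)
  have hKg : AEMeasurable (Function.uncurry fun x y ↦ q x * (K x y * g y)) (μ.prod ν) :=
    (hq.comp measurable_fst).aemeasurable.mul (hK.aemeasurable.mul hg.comp_snd)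
  calc ∫⁻ x, (∫⁻ y, K x y * f y ∂ν) ^ 2 ∂μ
      ≤ ∫⁻ x, A * ∫⁻ y, q x * (K x y * g y) ∂ν ∂μ := by
        refine lintegral_mono_ae (hA.mono fun x hx ↦ ?_)
        have hKg_x : AEMeasurable (fun y ↦ K x y * g y) ν := hK.of_uncurry_left.aemeasurable.mul hg
        calc (∫⁻ y, K x y * f y ∂ν) ^ 2
            ≤ (∫⁻ y, K x y * p y ∂ν) * ∫⁻ y, K x y * g y ∂ν :=
              sq_lintegral_mul_le_weighted hK.of_uncurry_left.aemeasurable hf hp.aemeasurable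
                hp0 hp_top
          _ ≤ A * q x * ∫⁻ y, K x y * g y ∂ν := by gcongr
          _ = A * ∫⁻ y, q x * (K x y * g y) ∂ν := by
              rw [lintegral_const_mul'' _ hKg_x, mul_assoc]
    _ = A * ∫⁻ y, ∫⁻ x, q x * (K x y * g y) ∂μ ∂ν :=
        (lintegral_const_mul'' A hKg.lintegral_prod_right').trans
          (congrArg (A * ·) (lintegral_lintegral_swap hKg))
    _ = A * ∫⁻ y, g y * ∫⁻ x, K x y * q x ∂μ ∂ν := by
        congr 1
        refine lintegral_congr fun y ↦ ?_
        have hKq_y : AEMeasurable (fun x ↦ K x y * q x) μ :=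
          (hK.of_uncurry_right.mul hq).aemeasurable
        rw [mul_comm, ← lintegral_mul_const'' _ hKq_y]
        exact lintegral_congr fun x ↦ by ring
    _ ≤ A * ∫⁻ y, g y * (B * p y) ∂ν := by
        gcongr A * ?_
        exact lintegral_mono_ae (hB.mono fun y hy ↦ by gcongr)
    _ = A * B * ∫⁻ y, f y ^ 2 ∂ν := by
        rw [mul_assoc, ← lintegral_const_mul'' _ (hf.pow_const 2)]
        congr 1
        refine lintegral_congr_ae ?_
        filter_upwards [hp0, hp_top] with y hy0 hy_top
        rw [show g y * (B * p y) = B * f y ^ 2 * ((p y)⁻¹ * p y) by ring,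
          ENNReal.inv_mul_cancel hy0 hy_top, mul_one]

theorem eLpNorm_two_lintegral_le_of_schur [SFinite μ] [SFinite ν] {K : α → β → ℝ≥0∞}
    (hK : Measurable (Function.uncurry K)) {p : β → ℝ≥0∞} {q : α → ℝ≥0∞} (hp : Measurable p)
    (hq : Measurable q) (hp0 : ∀ᵐ y ∂ν, p y ≠ 0) (hp_top : ∀ᵐ y ∂ν, p y ≠ ∞) {A B : ℝ≥0∞}
    (hA : ∀ᵐ x ∂μ, ∫⁻ y, K x y * p y ∂ν ≤ A * q x)
    (hB : ∀ᵐ y ∂ν, ∫⁻ x, K x y * q x ∂μ ≤ B * p y) {f : β → ℝ≥0∞} (hf : AEMeasurable f ν) :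
    eLpNorm (fun x ↦ ∫⁻ y, K x y * f y ∂ν) 2 μ ≤ (A * B) ^ (2⁻¹ : ℝ) * eLpNorm f 2 ν := by
  simp only [eLpNorm_eq_lintegral_rpow_enorm_toReal two_ne_zero ENNReal.ofNat_ne_top,
    enorm_eq_self, ENNReal.toReal_ofNat, ENNReal.rpow_two, one_div]
  rw [← ENNReal.mul_rpow_of_nonneg _ _ (by norm_num)]
  gcongr
  exact lintegral_sq_lintegral_le_of_schur hK hp hq hp0 hp_top hA hB hf

end SchurTest

section RieszPotential

variable {E : Type*} [NormedAddCommGroup E] [NormedSpace ℝ E] [MeasurableSpace E] [BorelSpace E]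
  [FiniteDimensional ℝ E] (μ : Measure E) [μ.IsAddHaarMeasure]

theorem lintegral_comp_smul {f : E → ℝ≥0∞} (hf : Measurable f) {R : ℝ} (hR : R ≠ 0) :
    ∫⁻ y, f (R • y) ∂μ = ENNReal.ofReal |(R ^ finrank ℝ E)⁻¹| * ∫⁻ x, f x ∂μ := by
  rw [← lintegral_map hf (measurable_const_smul R), Measure.map_addHaar_smul μ hR,
    lintegral_smul_measure, smul_eq_mul]

theorem lintegral_ball_norm_rpow_neg_lt_top [Nontrivial E] {s : ℝ} (hs : s < finrank ℝ E)
    (r : ℝ) : ∫⁻ y in ball (0 : E) r, ENNReal.ofReal (‖y‖ ^ (-s)) ∂μ < ∞ := by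
  refine (integrableOn_ball_of_norm_le_rpow (C := 1) finrank_pos hs ?_ ?_).setLIntegral_lt_top
  · exact ae_of_all _ fun y ↦ by simp [abs_of_nonneg (Real.rpow_nonneg (norm_nonneg y) _)]
  · exact (measurable_norm.pow_const _).aestronglyMeasurable

theorem lintegral_compl_ball_norm_rpow_neg_lt_top {t r : ℝ} (ht : finrank ℝ E < t) (hr : 0 < r) :
    ∫⁻ y in (ball (0 : E) r)ᶜ, ENNReal.ofReal (‖y‖ ^ (-t)) ∂μ < ∞ := by
  have ht0 : 0 < t := (Nat.cast_nonneg _).trans_lt ht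
  have h_decay : ∀ y ∈ (ball (0 : E) r)ᶜ,
      ‖‖y‖ ^ (-t)‖ ≤ (1 + r⁻¹) ^ t * (1 + ‖y‖) ^ (-t) := by
    intro y hy
    have hry : r ≤ ‖y‖ := by simpa using hy
    have hy0 : 0 < ‖y‖ := hr.trans_le hry
    have h_le : 1 + ‖y‖ ≤ (1 + r⁻¹) * ‖y‖ := by
      have : 1 ≤ r⁻¹ * ‖y‖ := by rw [← inv_mul_cancel₀ hr.ne']; gcongr
      linarith
    calc ‖‖y‖ ^ (-t)‖ = (1 + r⁻¹) ^ t * ((1 + r⁻¹) * ‖y‖) ^ (-t) := by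
          rw [Real.norm_of_nonneg (by positivity), Real.mul_rpow (by positivity) hy0.le,
            ← mul_assoc, ← Real.rpow_add (by positivity), add_neg_cancel, Real.rpow_zero, one_mul]
      _ ≤ (1 + r⁻¹) ^ t * (1 + ‖y‖) ^ (-t) := by
          gcongr ?_ * ?_
          exact Real.rpow_le_rpow_of_nonpos (by positivity) h_le (neg_nonpos.2 ht0.le)
  refine IntegrableOn.setLIntegral_lt_top ?_
  refine Integrable.mono' ((integrable_one_add_norm ht).const_mul ((1 + r⁻¹) ^ t)).integrableOn
    (measurable_norm.pow_const _).aestronglyMeasurable ?_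
  exact ae_restrict_of_forall_mem measurableSet_ball.compl h_decay

theorem lintegral_norm_rpow_mul_norm_sub_rpow_le_of_norm_eq_one {a b : ℝ} (ha : 0 ≤ a)
    (hb : 0 ≤ b) {x : E} (hx : ‖x‖ = 1) :
    ∫⁻ y, ENNReal.ofReal (‖y‖ ^ (-a)) * ENNReal.ofReal (‖x - y‖ ^ (-b)) ∂μ ≤
      ENNReal.ofReal (2 ^ b) * ∫⁻ y in ball 0 2⁻¹, ENNReal.ofReal (‖y‖ ^ (-a)) ∂μ +
      (ENNReal.ofReal (2 ^ a) * ∫⁻ y in ball 0 2⁻¹, ENNReal.ofReal (‖y‖ ^ (-b)) ∂μ +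
      ENNReal.ofReal (3 ^ b) * ∫⁻ y in (ball 0 2⁻¹)ᶜ, ENNReal.ofReal (‖y‖ ^ (-(a + b))) ∂μ) := by
  set F : E → ℝ≥0∞ := fun y ↦ ENNReal.ofReal (‖y‖ ^ (-a)) * ENNReal.ofReal (‖x - y‖ ^ (-b))
  set S := ball (0 : E) 2⁻¹
  set T := ball x 2⁻¹
  have h_near_zero : ∫⁻ y in S, F y ∂μ ≤
      ENNReal.ofReal (2 ^ b) * ∫⁻ y in S, ENNReal.ofReal (‖y‖ ^ (-a)) ∂μ := by
    refine setLIntegral_le_mul_setLIntegral measurableSet_ball subset_rfl ENNReal.ofReal_ne_top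
      fun y hy ↦ ?_
    have hy : ‖y‖ < 2⁻¹ := mem_ball_zero_iff.1 hy
    have hxy : 2⁻¹ * 1 ≤ ‖x - y‖ := by linarith [norm_sub_norm_le x y]
    rw [show F y = _ from mul_comm _ _]
    gcongr
    simpa using Real.rpow_neg_le_of_inv_mul_le hb two_pos one_pos hxy
  have h_near_x : ∫⁻ y in T, F y ∂μ ≤
      ENNReal.ofReal (2 ^ a) * ∫⁻ y in S, ENNReal.ofReal (‖y‖ ^ (-b)) ∂μ := by
    rw [← setLIntegral_ball_comp_sub_left μ (g := fun u ↦ ENNReal.ofReal (‖u‖ ^ (-b)))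
      (by fun_prop) x]
    refine setLIntegral_le_mul_setLIntegral measurableSet_ball subset_rfl ENNReal.ofReal_ne_top
      fun y hy ↦ ?_
    have hy : ‖y - x‖ < 2⁻¹ := mem_ball_iff_norm.1 hy
    have hy_norm : 2⁻¹ * 1 ≤ ‖y‖ := by linarith [norm_sub_norm_le x y, norm_sub_rev y x]
    gcongr ENNReal.ofReal ?_ * _
    simpa using Real.rpow_neg_le_of_inv_mul_le ha two_pos one_pos hy_norm
  have h_far : ∫⁻ y in Sᶜ \ T, F y ∂μ ≤
      ENNReal.ofReal (3 ^ b) * ∫⁻ y in Sᶜ, ENNReal.ofReal (‖y‖ ^ (-(a + b))) ∂μ := by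
    refine setLIntegral_le_mul_setLIntegral (measurableSet_ball.compl.diff measurableSet_ball)
      sdiff_subset ENNReal.ofReal_ne_top fun y hy ↦ ?_
    have hy_half : 2⁻¹ ≤ ‖y‖ := by simpa [S] using hy.1
    have hxy : 2⁻¹ ≤ ‖x - y‖ := by simpa [T, dist_eq_norm, norm_sub_rev] using hy.2
    have h_cmp : 3⁻¹ * ‖y‖ ≤ ‖x - y‖ := by linarith [norm_sub_norm_le y x, norm_sub_rev y x]
    have hy0 : 0 < ‖y‖ := by linarith
    calc F y ≤ ENNReal.ofReal (‖y‖ ^ (-a)) * ENNReal.ofReal (3 ^ b * ‖y‖ ^ (-b)) := by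
          gcongr _ * ENNReal.ofReal ?_
          exact Real.rpow_neg_le_of_inv_mul_le hb three_pos hy0 h_cmp
      _ = ENNReal.ofReal (3 ^ b) * ENNReal.ofReal (‖y‖ ^ (-(a + b))) := by
          rw [← ENNReal.ofReal_mul (by positivity), ← ENNReal.ofReal_mul (by positivity), neg_add,
            Real.rpow_add hy0]
          ring_nf
  exact (lintegral_le_setLIntegral_add_setLIntegral_add_diff μ measurableSet_ball T F).trans
    (add_le_add h_near_zero (add_le_add h_near_x h_far))

theorem lintegral_norm_rpow_mul_norm_smul_sub_rpow (a b : ℝ) {r : ℝ} (hr : 0 < r) (u : E) :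
    ∫⁻ y, ENNReal.ofReal (‖y‖ ^ (-a)) * ENNReal.ofReal (‖r • u - y‖ ^ (-b)) ∂μ =
      ENNReal.ofReal (r ^ ((finrank ℝ E : ℝ) - a - b)) *
        ∫⁻ z, ENNReal.ofReal (‖z‖ ^ (-a)) * ENNReal.ofReal (‖u - z‖ ^ (-b)) ∂μ := by
  set G : E → ℝ≥0∞ := fun z ↦ ENNReal.ofReal (‖z‖ ^ (-a)) * ENNReal.ofReal (‖u - z‖ ^ (-b))
  have h_scale : ∀ z : E, ENNReal.ofReal (‖r • z‖ ^ (-a)) * ENNReal.ofReal (‖r • u - r • z‖ ^ (-b))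
      = ENNReal.ofReal (r ^ (-a) * r ^ (-b)) * G z := by
    intro z
    rw [← smul_sub, norm_smul_of_nonneg hr.le, norm_smul_of_nonneg hr.le,
      Real.mul_rpow hr.le (norm_nonneg _), Real.mul_rpow hr.le (norm_nonneg _),
      ENNReal.ofReal_mul (by positivity), ENNReal.ofReal_mul (by positivity),
      ENNReal.ofReal_mul (by positivity)]
    ring
  calc ∫⁻ y, ENNReal.ofReal (‖y‖ ^ (-a)) * ENNReal.ofReal (‖r • u - y‖ ^ (-b)) ∂μ
      = ∫⁻ y, ENNReal.ofReal (r ^ (-a) * r ^ (-b)) * G (r⁻¹ • y) ∂μ := by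
        refine lintegral_congr fun y ↦ ?_
        rw [← h_scale, smul_inv_smul₀ hr.ne']
    _ = ENNReal.ofReal (r ^ (-a) * r ^ (-b)) *
          (ENNReal.ofReal |((r⁻¹) ^ finrank ℝ E)⁻¹| * ∫⁻ z, G z ∂μ) := by
        rw [lintegral_const_mul' _ _ ENNReal.ofReal_ne_top,
          lintegral_comp_smul μ (by fun_prop) (inv_ne_zero hr.ne')]
    _ = ENNReal.ofReal (r ^ ((finrank ℝ E : ℝ) - a - b)) * ∫⁻ z, G z ∂μ := by
        rw [← mul_assoc, ← ENNReal.ofReal_mul (by positivity), inv_pow, inv_inv,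
          abs_of_pos (by positivity), ← Real.rpow_natCast, ← Real.rpow_add hr,
          ← Real.rpow_add hr]
        ring_nf

theorem exists_lintegral_norm_rpow_mul_norm_sub_rpow_le {a b : ℝ} (ha : a < finrank ℝ E)
    (hb : b < finrank ℝ E) (hab : finrank ℝ E < a + b) :
    ∃ C : ℝ≥0, ∀ x : E, x ≠ 0 →
      ∫⁻ y, ENNReal.ofReal (‖y‖ ^ (-a)) * ENNReal.ofReal (‖x - y‖ ^ (-b)) ∂μ ≤
        C * ENNReal.ofReal (‖x‖ ^ ((finrank ℝ E : ℝ) - a - b)) := by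
  have : Nontrivial E := nontrivial_of_finrank_pos (R := ℝ) (by exact_mod_cast (by linarith :
    (0 : ℝ) < finrank ℝ E))
  have h_ball_a := lintegral_ball_norm_rpow_neg_lt_top μ ha 2⁻¹
  have h_ball_b := lintegral_ball_norm_rpow_neg_lt_top μ hb 2⁻¹
  have h_compl := lintegral_compl_ball_norm_rpow_neg_lt_top μ hab (r := 2⁻¹) (by norm_num)
  set M := ENNReal.ofReal (2 ^ b) * ∫⁻ y in ball (0 : E) 2⁻¹, ENNReal.ofReal (‖y‖ ^ (-a)) ∂μ +
      (ENNReal.ofReal (2 ^ a) * ∫⁻ y in ball (0 : E) 2⁻¹, ENNReal.ofReal (‖y‖ ^ (-b)) ∂μ +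
      ENNReal.ofReal (3 ^ b) * ∫⁻ y in (ball (0 : E) 2⁻¹)ᶜ, ENNReal.ofReal (‖y‖ ^ (-(a + b))) ∂μ)
  have hM : M ≠ ∞ := by finiteness
  refine ⟨M.toNNReal, fun x hx ↦ ?_⟩
  set u := ‖x‖⁻¹ • x
  calc ∫⁻ y, ENNReal.ofReal (‖y‖ ^ (-a)) * ENNReal.ofReal (‖x - y‖ ^ (-b)) ∂μ
      = ENNReal.ofReal (‖x‖ ^ ((finrank ℝ E : ℝ) - a - b)) *
          ∫⁻ z, ENNReal.ofReal (‖z‖ ^ (-a)) * ENNReal.ofReal (‖u - z‖ ^ (-b)) ∂μ := by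
        rw [← lintegral_norm_rpow_mul_norm_smul_sub_rpow μ a b (norm_pos_iff.2 hx),
          smul_inv_smul₀ (norm_ne_zero_iff.2 hx)]
    _ ≤ ENNReal.ofReal (‖x‖ ^ ((finrank ℝ E : ℝ) - a - b)) * M := by
        gcongr
        exact lintegral_norm_rpow_mul_norm_sub_rpow_le_of_norm_eq_one μ (by linarith)
          (by linarith) (norm_smul_inv_norm hx)
    _ = M.toNNReal * ENNReal.ofReal (‖x‖ ^ ((finrank ℝ E : ℝ) - a - b)) := by
        rw [ENNReal.coe_toNNReal hM, mul_comm]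

theorem exists_steinWeiss_schur_row_le {lam β : ℝ} (hlam : lam < finrank ℝ E)
    (hβ : β < finrank ℝ E / 2) (hsum : lam + β = finrank ℝ E) :
    ∃ A : ℝ≥0, ∀ x : E, x ≠ 0 →
      ∫⁻ y, ENNReal.ofReal (‖x‖ ^ (-β)) * ENNReal.ofReal (‖x - y‖ ^ (-lam)) *
          ENNReal.ofReal (‖y‖ ^ (-((finrank ℝ E : ℝ) / 2))) ∂μ ≤
        A * ENNReal.ofReal (‖x‖ ^ (-((finrank ℝ E : ℝ) / 2))) := by
  set d : ℝ := (finrank ℝ E : ℝ)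
  obtain ⟨A, hA⟩ := exists_lintegral_norm_rpow_mul_norm_sub_rpow_le μ (a := d / 2) (b := lam)
    (by linarith) hlam (by linarith)
  refine ⟨A, fun x hx ↦ ?_⟩
  calc ∫⁻ y, ENNReal.ofReal (‖x‖ ^ (-β)) * ENNReal.ofReal (‖x - y‖ ^ (-lam)) *
        ENNReal.ofReal (‖y‖ ^ (-(d / 2))) ∂μ
      = ENNReal.ofReal (‖x‖ ^ (-β)) *
          ∫⁻ y, ENNReal.ofReal (‖y‖ ^ (-(d / 2))) * ENNReal.ofReal (‖x - y‖ ^ (-lam)) ∂μ := by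
        rw [← lintegral_const_mul' _ _ ENNReal.ofReal_ne_top]
        exact lintegral_congr fun y ↦ by ring
    _ ≤ ENNReal.ofReal (‖x‖ ^ (-β)) * (A * ENNReal.ofReal (‖x‖ ^ (d - d / 2 - lam))) := by
        gcongr
        exact hA x hx
    _ = A * ENNReal.ofReal (‖x‖ ^ (-(d / 2))) := by
        rw [mul_left_comm, ← ENNReal.ofReal_mul (by positivity),
          ← Real.rpow_add (norm_pos_iff.2 hx), show -β + (d - d / 2 - lam) = -(d / 2) by linarith]

theorem exists_steinWeiss_schur_column_le {lam β : ℝ} (hlam : lam < finrank ℝ E)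
    (hβ : β < finrank ℝ E / 2) (hsum : lam + β = finrank ℝ E) :
    ∃ B : ℝ≥0, ∀ y : E, y ≠ 0 →
      ∫⁻ x, ENNReal.ofReal (‖x‖ ^ (-β)) * ENNReal.ofReal (‖x - y‖ ^ (-lam)) *
          ENNReal.ofReal (‖x‖ ^ (-((finrank ℝ E : ℝ) / 2))) ∂μ ≤
        B * ENNReal.ofReal (‖y‖ ^ (-((finrank ℝ E : ℝ) / 2))) := by
  set d : ℝ := (finrank ℝ E : ℝ)
  obtain ⟨B, hB⟩ := exists_lintegral_norm_rpow_mul_norm_sub_rpow_le μ (a := β + d / 2) (b := lam)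
    (by linarith) hlam (by linarith)
  refine ⟨B, fun y hy ↦ ?_⟩
  calc ∫⁻ x, ENNReal.ofReal (‖x‖ ^ (-β)) * ENNReal.ofReal (‖x - y‖ ^ (-lam)) *
        ENNReal.ofReal (‖x‖ ^ (-(d / 2))) ∂μ
      = ∫⁻ x, ENNReal.ofReal (‖x‖ ^ (-(β + d / 2))) * ENNReal.ofReal (‖y - x‖ ^ (-lam)) ∂μ := by
        refine lintegral_congr fun x ↦ ?_
        rw [norm_sub_rev y x, neg_add, Real.rpow_add' (norm_nonneg x) (by linarith),
          ENNReal.ofReal_mul (by positivity)]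
        ring
    _ ≤ B * ENNReal.ofReal (‖y‖ ^ (d - (β + d / 2) - lam)) := hB y hy
    _ = B * ENNReal.ofReal (‖y‖ ^ (-(d / 2))) := by
        rw [show d - (β + d / 2) - lam = -(d / 2) by linarith]

theorem exists_eLpNorm_weighted_riesz_potential_le {lam β : ℝ} (hlam : lam < finrank ℝ E)
    (hβ : β < finrank ℝ E / 2) (hsum : lam + β = finrank ℝ E) :
    ∃ C : ℝ≥0, ∀ f : E → ℝ, AEMeasurable f μ →
      eLpNorm (fun x ↦ ‖x‖ ^ (-β) * ∫ y, ‖x - y‖ ^ (-lam) * f y ∂μ) 2 μ ≤ C * eLpNorm f 2 μ := by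
  have : Nontrivial E := nontrivial_of_finrank_pos (R := ℝ) (by exact_mod_cast (by linarith :
    (0 : ℝ) < finrank ℝ E))
  obtain ⟨A, hA⟩ := exists_steinWeiss_schur_row_le μ hlam hβ hsum
  obtain ⟨B, hB⟩ := exists_steinWeiss_schur_column_le μ hlam hβ hsum
  have h_ne_zero : ∀ᵐ x ∂μ, x ≠ 0 := compl_mem_ae_iff.2 (measure_singleton 0)
  have h_weight_pos : ∀ᵐ y ∂μ, ENNReal.ofReal (‖y‖ ^ (-((finrank ℝ E : ℝ) / 2))) ≠ 0 :=
    h_ne_zero.mono fun y hy ↦ by simpa using Real.rpow_pos_of_pos (norm_pos_iff.2 hy) _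
  refine ⟨(A * B) ^ (2⁻¹ : ℝ), fun f hf ↦ ?_⟩
  calc eLpNorm (fun x ↦ ‖x‖ ^ (-β) * ∫ y, ‖x - y‖ ^ (-lam) * f y ∂μ) 2 μ
      ≤ eLpNorm (fun x ↦ ∫⁻ y, ENNReal.ofReal (‖x‖ ^ (-β)) *
          ENNReal.ofReal (‖x - y‖ ^ (-lam)) * ‖f y‖ₑ ∂μ) 2 μ :=
        eLpNorm_mono_enorm fun x ↦ enorm_mul_integral_mul_le (by positivity) fun y ↦ by positivity
    _ ≤ (↑A * ↑B) ^ (2⁻¹ : ℝ) * eLpNorm (fun y ↦ ‖f y‖ₑ) 2 μ :=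
        eLpNorm_two_lintegral_le_of_schur (by fun_prop) (by fun_prop) (by fun_prop) h_weight_pos
          (ae_of_all _ fun _ ↦ ENNReal.ofReal_ne_top) (h_ne_zero.mono hA) (h_ne_zero.mono hB)
          hf.enorm
    _ = _ := by
        rw [eLpNorm_enorm, ENNReal.coe_rpow_of_nonneg _ (by norm_num), ENNReal.coe_mul]

end RieszPotential

theorem stein_weiss_L2_general (n : ℕ) (lam β : ℝ)
    (hlamn : lam < n) (hβn : β < (n : ℝ) / 2)
    (hsum : lam + β = n) :
    ∃ C > 0, ∀ f : EuclideanSpace ℝ (Fin n) → ℝ, MemLp f 2 →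
      eLpNorm (fun x : EuclideanSpace ℝ (Fin n) =>
          ‖x‖ ^ (-β) * ∫ y, ‖x - y‖ ^ (-lam) * f y) 2 volume
        ≤ ENNReal.ofReal C * eLpNorm f 2 volume := by
  have hd : (finrank ℝ (EuclideanSpace ℝ (Fin n)) : ℝ) = n := by simp
  obtain ⟨C, hC⟩ := exists_eLpNorm_weighted_riesz_potential_le
    (volume : Measure (EuclideanSpace ℝ (Fin n))) (lam := lam) (β := β) (by rwa [hd])
    (by rwa [hd]) (by rwa [hd])
  refine ⟨C + 1, by positivity, fun f hf ↦ (hC f hf.aemeasurable).trans ?_⟩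
  gcongr
  rw [← ENNReal.ofReal_coe_nnreal]
  exact ENNReal.ofReal_le_ofReal (by linarith)

/-- Stein–Weiss inequality, `L²` case: for `0 < λ < n`, `0 < β < n/2`, `λ + β = n`,
`‖ |x|^{-β} (|·|^{-λ} * f) ‖_{L²} ≤ C ‖f‖_{L²}`. -/
theorem stein_weiss_L2 (n : ℕ) (hn : 1 ≤ n) (lam β : ℝ)
    (hlam0 : 0 < lam) (hlamn : lam < n) (hβ0 : 0 < β) (hβn : β < (n : ℝ) / 2)
    (hsum : lam + β = n) :
    ∃ C > 0, ∀ f : EuclideanSpace ℝ (Fin n) → ℝ, MemLp f 2 →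
      eLpNorm (fun x : EuclideanSpace ℝ (Fin n) =>
          ‖x‖ ^ (-β) * ∫ y, ‖x - y‖ ^ (-lam) * f y) 2 volume
        ≤ ENNReal.ofReal C * eLpNorm f 2 volume :=
  stein_weiss_L2_general n lam β hlamn hβn hsum
end

section
/- Let 1 < α < 2 and n ≥ 4 with α < n−2. Suppose h : ℝ^n → ℝ satisfies |h(x)| ≤ K|x|^{1−α} for x ≠ 0, and let T be the convolution operator with kernel bounded by C|x|^{−(n−α+1)}. Then for any L^∞ function ζ supported in a ball of radius N, ‖T(h ζ)‖_{L²} ≤ C′ K ‖ζ‖_{L^∞} N^{n/2}. -/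
/-!
Bound the operator pointwise by `Ck K Cζ (W ⋆ κ)` with `κ = |z|^{-(n-α+1)}` and
`W = 1_{B(x₀,N)} |y|^{1-α}`, and split `κ` at radius `N`. Young's inequality
`‖f ⋆ g‖₂ ≤ ‖f‖₁ ‖g‖₂` applies to the near part with `κ` in `L¹` and `W` in `L²`,
and to the far part with `W` in `L¹` and `κ` in `L²`; these four norms are finite because
`1 < α` and `2 (α - 1) < n`. They are radial power integrals, which scale homogeneously
in `N`, and in both products the powers of `N` add up to `N^{n/2}` since the two exponents
`n - α + 1` and `α - 1` add up to `n`.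
-/

open MeasureTheory Metric Set
open scoped ENNReal NNReal Pointwise

theorem enorm_rpow_eq_ofReal_norm_rpow {E : Type*} [NormedAddCommGroup E] {z : E} (hz : z ≠ 0)
    (r : ℝ) : ‖z‖ₑ ^ r = ENNReal.ofReal (‖z‖ ^ r) := by
  rw [← ofReal_norm, ENNReal.ofReal_rpow_of_pos (norm_pos_iff.2 hz)]

theorem enorm_le_ofReal_mul_enorm_rpow {E : Type*} [NormedAddCommGroup E] {u c r : ℝ} {z : E}
    (hz : z ≠ 0) (h : |u| ≤ c * ‖z‖ ^ r) : ‖u‖ₑ ≤ ENNReal.ofReal c * ‖z‖ₑ ^ r := by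
  rw [enorm_rpow_eq_ofReal_norm_rpow hz, Real.enorm_eq_ofReal_abs,
    ← ENNReal.ofReal_mul' (by positivity)]
  exact ENNReal.ofReal_le_ofReal h

namespace MeasureTheory

theorem eLpNorm_two_eq_lintegral_rpow {α : Type*} [MeasurableSpace α] {μ : Measure α}
    (f : α → ℝ≥0∞) : eLpNorm f 2 μ = (∫⁻ x, f x ^ (2 : ℝ) ∂μ) ^ (1 / 2 : ℝ) := by
  simpa using eLpNorm_nnreal_eq_lintegral (f := f) (μ := μ) (p := 2) two_ne_zero

theorem eLpNorm_two_indicator_enorm_rpow_le {E : Type*} [NormedAddCommGroup E]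
    [MeasurableSpace E] {μ : Measure E} {s : Set E} (hs : MeasurableSet s) {r N e : ℝ}
    (hN : 0 ≤ N) {A : ℝ≥0∞} (h : ∫⁻ z in s, ‖z‖ₑ ^ (2 * r) ∂μ ≤ ENNReal.ofReal (N ^ e) * A) :
    eLpNorm (s.indicator fun z => ‖z‖ₑ ^ r) 2 μ ≤ ENNReal.ofReal (N ^ (e / 2)) * A ^ (1 / 2 : ℝ) :=
  calc eLpNorm (s.indicator fun z => ‖z‖ₑ ^ r) 2 μ
      = (∫⁻ z in s, ‖z‖ₑ ^ (2 * r) ∂μ) ^ (1 / 2 : ℝ) := by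
        simp only [eLpNorm_indicator_eq_eLpNorm_restrict hs, eLpNorm_two_eq_lintegral_rpow,
          ← ENNReal.rpow_mul, mul_comm r]
    _ ≤ (ENNReal.ofReal (N ^ e) * A) ^ (1 / 2 : ℝ) := by gcongr
    _ = ENNReal.ofReal (N ^ (e / 2)) * A ^ (1 / 2 : ℝ) := by
        rw [ENNReal.mul_rpow_of_nonneg _ _ (by norm_num),
          ENNReal.ofReal_rpow_of_nonneg (by positivity) (by norm_num), ← Real.rpow_mul hN,
          mul_one_div]

theorem lintegral_mul_rpow_two_le {α : Type*} [MeasurableSpace α] {μ : Measure α}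
    {f g : α → ℝ≥0∞} (hf : AEMeasurable f μ) (hg : AEMeasurable g μ) :
    (∫⁻ a, f a * g a ∂μ) ^ (2 : ℝ) ≤ (∫⁻ a, f a ∂μ) * ∫⁻ a, f a * g a ^ (2 : ℝ) ∂μ := by
  have hsqrt : ∀ a, f a ^ (1 / 2 : ℝ) * (f a ^ (1 / 2 : ℝ) * g a) = f a * g a := by
    intro a
    rw [← mul_assoc, ← ENNReal.rpow_add_of_nonneg _ _ (by norm_num) (by norm_num)]
    norm_num
  have hcs := ENNReal.lintegral_mul_le_Lp_mul_Lq μ Real.HolderConjugate.two_two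
    (hf.pow_const (1 / 2 : ℝ)) ((hf.pow_const (1 / 2 : ℝ)).mul hg)
  simp only [Pi.mul_apply, hsqrt] at hcs
  calc (∫⁻ a, f a * g a ∂μ) ^ (2 : ℝ)
      ≤ ((∫⁻ a, (f a ^ (1 / 2 : ℝ)) ^ (2 : ℝ) ∂μ) ^ (1 / 2 : ℝ) *
          (∫⁻ a, (f a ^ (1 / 2 : ℝ) * g a) ^ (2 : ℝ) ∂μ) ^ (1 / 2 : ℝ)) ^ (2 : ℝ) := by
        gcongr
    _ = (∫⁻ a, f a ∂μ) * ∫⁻ a, f a * g a ^ (2 : ℝ) ∂μ := by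
        simp only [ENNReal.mul_rpow_of_nonneg _ _ zero_le_two, ← ENNReal.rpow_mul]
        norm_num

section Convolution

variable {G : Type*} [MeasurableSpace G]

theorem lconvolution_add [Add G] [Neg G] [MeasurableAdd₂ G] [MeasurableNeg G] {μ : Measure G}
    {f g h : G → ℝ≥0∞} (hf : Measurable f) (hg : Measurable g) :
    f ⋆ₗ[μ] (g + h) = f ⋆ₗ[μ] g + f ⋆ₗ[μ] h := by
  ext x
  simp only [lconvolution_def, Pi.add_apply, mul_add]
  exact lintegral_add_left (by fun_prop) _

theorem eLpNorm_two_lconvolution_le [AddGroup G] [MeasurableAdd₂ G] [MeasurableNeg G]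
    {μ : Measure G} [μ.IsAddLeftInvariant] [SFinite μ] {f g : G → ℝ≥0∞} (hf : Measurable f)
    (hg : Measurable g) :
    eLpNorm (f ⋆ₗ[μ] g) 2 μ ≤ (∫⁻ y, f y ∂μ) * eLpNorm g 2 μ := by
  have hpoint : ∀ x, (f ⋆ₗ[μ] g) x ^ (2 : ℝ) ≤
      (∫⁻ y, f y ∂μ) * ∫⁻ y, f y * g (-y + x) ^ (2 : ℝ) ∂μ := fun x =>
    lintegral_mul_rpow_two_le hf.aemeasurable (by fun_prop)
  have hsq : ∫⁻ x, (f ⋆ₗ[μ] g) x ^ (2 : ℝ) ∂μ ≤ (∫⁻ y, f y ∂μ) ^ (2 : ℝ) * ∫⁻ x, g x ^ (2 : ℝ) ∂μ :=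
    calc ∫⁻ x, (f ⋆ₗ[μ] g) x ^ (2 : ℝ) ∂μ
        ≤ (∫⁻ y, f y ∂μ) * ∫⁻ x, ∫⁻ y, f y * g (-y + x) ^ (2 : ℝ) ∂μ ∂μ := by
          rw [← lintegral_const_mul _ (by fun_prop)]
          exact lintegral_mono hpoint
      _ = (∫⁻ y, f y ∂μ) * ∫⁻ y, f y * ∫⁻ x, g (-y + x) ^ (2 : ℝ) ∂μ ∂μ := by
          rw [lintegral_lintegral_swap (by fun_prop)]
          exact congrArg _ (lintegral_congr fun y => lintegral_const_mul _ (by fun_prop))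
      _ = (∫⁻ y, f y ∂μ) ^ (2 : ℝ) * ∫⁻ x, g x ^ (2 : ℝ) ∂μ := by
          simp_rw [lintegral_add_left_eq_self (fun x => g x ^ (2 : ℝ))]
          rw [lintegral_mul_const _ hf, ENNReal.rpow_two, sq, mul_assoc]
  rw [eLpNorm_two_eq_lintegral_rpow, eLpNorm_two_eq_lintegral_rpow]
  calc (∫⁻ x, (f ⋆ₗ[μ] g) x ^ (2 : ℝ) ∂μ) ^ (1 / 2 : ℝ)
      ≤ ((∫⁻ y, f y ∂μ) ^ (2 : ℝ) * ∫⁻ x, g x ^ (2 : ℝ) ∂μ) ^ (1 / 2 : ℝ) := by gcongr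
    _ = (∫⁻ y, f y ∂μ) * (∫⁻ x, g x ^ (2 : ℝ) ∂μ) ^ (1 / 2 : ℝ) := by
        rw [ENNReal.mul_rpow_of_nonneg _ _ (by norm_num), ← ENNReal.rpow_mul]
        norm_num

variable [AddCommGroup G] [MeasurableAdd₂ G] [MeasurableNeg G] {μ : Measure G} [SFinite μ]

theorem eLpNorm_integral_mul_le_lconvolution [NullSingletonClass μ] {f g : G → ℝ}
    {F Φ : G → ℝ≥0∞} {a b : ℝ≥0} (hF : Measurable F) (hΦ : Measurable Φ)
    (hf : ∀ z ≠ 0, ‖f z‖ₑ ≤ a * F z) (hg : ∀ y ≠ 0, ‖g y‖ₑ ≤ b * Φ y) (p : ℝ≥0∞) :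
    eLpNorm (fun x => ∫ y, f (x - y) * g y ∂μ) p μ ≤ (a * b : ℝ≥0∞) * eLpNorm (Φ ⋆ₗ[μ] F) p μ := by
  refine eLpNorm_le_mul_eLpNorm_of_ae_le_mul'' p
    (measurable_lconvolution μ hΦ hF).aestronglyMeasurable (ae_of_all _ fun x => ?_)
  calc ‖∫ y, f (x - y) * g y ∂μ‖ₑ
      ≤ ∫⁻ y, ‖f (x - y) * g y‖ₑ ∂μ := enorm_integral_le_lintegral_enorm _
    _ ≤ ∫⁻ y, (a * b : ℝ≥0∞) * (Φ y * F (-y + x)) ∂μ := by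
        refine lintegral_mono_ae ?_
        filter_upwards [μ.ae_ne 0, μ.ae_ne x] with y hy0 hyx
        rw [enorm_mul, neg_add_eq_sub]
        calc ‖f (x - y)‖ₑ * ‖g y‖ₑ ≤ a * F (x - y) * (b * Φ y) :=
              mul_le_mul' (hf _ (sub_ne_zero.2 hyx.symm)) (hg y hy0)
          _ = (a * b : ℝ≥0∞) * (Φ y * F (x - y)) := by ring
    _ = (a * b : ℝ≥0∞) * ‖(Φ ⋆ₗ[μ] F) x‖ₑ := by
        rw [lintegral_const_mul' _ _ (by finiteness), enorm_eq_self, lconvolution_def]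

theorem eLpNorm_two_lconvolution_le_split [μ.IsAddLeftInvariant] [μ.IsNegInvariant]
    {W κ : G → ℝ≥0∞} (hW : Measurable W) (hκ : Measurable κ)
    {s : Set G} (hs : MeasurableSet s) :
    eLpNorm (W ⋆ₗ[μ] κ) 2 μ ≤
      (∫⁻ z in s, κ z ∂μ) * eLpNorm W 2 μ + (∫⁻ y, W y ∂μ) * eLpNorm (sᶜ.indicator κ) 2 μ := by
  have hnear : Measurable (s.indicator κ) := hκ.indicator hs
  have hfar : Measurable (sᶜ.indicator κ) := hκ.indicator hs.compl
  calc eLpNorm (W ⋆ₗ[μ] κ) 2 μ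
      = eLpNorm (s.indicator κ ⋆ₗ[μ] W + W ⋆ₗ[μ] sᶜ.indicator κ) 2 μ := by
        rw [lconvolution_comm (f := s.indicator κ), ← lconvolution_add hW hnear,
          indicator_self_add_compl]
    _ ≤ eLpNorm (s.indicator κ ⋆ₗ[μ] W) 2 μ + eLpNorm (W ⋆ₗ[μ] sᶜ.indicator κ) 2 μ :=
        eLpNorm_add_le (measurable_lconvolution μ hnear hW).aestronglyMeasurable
          (measurable_lconvolution μ hW hfar).aestronglyMeasurable one_le_two
    _ ≤ _ := by
        rw [← lintegral_indicator hs]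
        exact add_le_add (eLpNorm_two_lconvolution_le hnear hW)
          (eLpNorm_two_lconvolution_le hW hfar)

end Convolution

section Scaling

variable {E : Type*} [NormedAddCommGroup E] [NormedSpace ℝ E] [FiniteDimensional ℝ E]
  [MeasurableSpace E] [BorelSpace E] (μ : Measure E) [μ.IsAddHaarMeasure]

local notation "d" => Module.finrank ℝ E

theorem lintegral_comp_inv_smul_of_pos (g : E → ℝ≥0∞) {R : ℝ} (hR : 0 < R) :
    ∫⁻ x, g (R⁻¹ • x) ∂μ = ENNReal.ofReal (R ^ d) * ∫⁻ x, g x ∂μ := by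
  have hR' : R⁻¹ ≠ 0 := inv_ne_zero hR.ne'
  calc ∫⁻ x, g (R⁻¹ • x) ∂μ = ∫⁻ x, g x ∂(μ.map (R⁻¹ • ·)) :=
        (lintegral_map_equiv g (MeasurableEquiv.smul₀ R⁻¹ hR')).symm
    _ = ENNReal.ofReal (R ^ d) * ∫⁻ x, g x ∂μ := by
        rw [Measure.map_addHaar_smul μ hR', lintegral_smul_measure]
        simp [abs_of_pos hR]

theorem setLIntegral_smul_set_enorm_rpow {s : Set E} (hs : MeasurableSet s) (r : ℝ) {R : ℝ}
    (hR : 0 < R) :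
    ∫⁻ z in R • s, ‖z‖ₑ ^ r ∂μ = ENNReal.ofReal (R ^ (d + r)) * ∫⁻ z in s, ‖z‖ₑ ^ r ∂μ := by
  have hpoint : (R • s).indicator (‖·‖ₑ ^ r) =
      fun z => ENNReal.ofReal (R ^ r) * s.indicator (‖·‖ₑ ^ r) (R⁻¹ • z) := by
    ext z
    have hz : ‖z‖ₑ = ENNReal.ofReal R * ‖R⁻¹ • z‖ₑ := by
      rw [enorm_smul, ← mul_assoc, ← ofReal_norm R⁻¹, ← ENNReal.ofReal_mul hR.le,
        Real.norm_of_nonneg (inv_nonneg.2 hR.le), mul_inv_cancel₀ hR.ne', ENNReal.ofReal_one,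
        one_mul]
    by_cases hzs : R⁻¹ • z ∈ s
    · rw [indicator_of_mem ((mem_smul_set_iff_inv_smul_mem₀ hR.ne' s z).2 hzs),
        indicator_of_mem hzs, hz, ENNReal.mul_rpow_of_ne_top ENNReal.ofReal_ne_top enorm_ne_top,
        ENNReal.ofReal_rpow_of_pos hR]
    · rw [indicator_of_notMem fun h => hzs ((mem_smul_set_iff_inv_smul_mem₀ hR.ne' s z).1 h),
        indicator_of_notMem hzs, mul_zero]
  rw [← lintegral_indicator (hs.const_smul₀ R), hpoint,
    lintegral_const_mul' _ _ ENNReal.ofReal_ne_top, lintegral_comp_inv_smul_of_pos μ _ hR,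
    lintegral_indicator hs, ← mul_assoc, ← ENNReal.ofReal_mul (by positivity),
    ← Real.rpow_natCast, ← Real.rpow_add hR, add_comm]

theorem setLIntegral_compl_ball_enorm_rpow_lt_top {r : ℝ} (hr : r < -(d : ℝ)) :
    ∫⁻ z in (ball (0 : E) 1)ᶜ, ‖z‖ₑ ^ r ∂μ < ∞ := by
  have hfin := finite_integral_one_add_norm (μ := μ) (r := -r) (by linarith)
  rw [neg_neg] at hfin
  calc ∫⁻ z in (ball (0 : E) 1)ᶜ, ‖z‖ₑ ^ r ∂μ
      ≤ ∫⁻ z in (ball (0 : E) 1)ᶜ,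
          ENNReal.ofReal (2 ^ (-r)) * ENNReal.ofReal ((1 + ‖z‖) ^ r) ∂μ := by
        refine setLIntegral_mono' measurableSet_ball.compl fun z hz => ?_
        have hz1 : 1 ≤ ‖z‖ := by simpa using hz
        have hz0 : 0 < ‖z‖ := by linarith
        rw [enorm_rpow_eq_ofReal_norm_rpow (norm_pos_iff.1 hz0),
          ← ENNReal.ofReal_mul (by positivity)]
        refine ENNReal.ofReal_le_ofReal ?_
        have hr0 : r ≤ 0 := by linarith [(Nat.cast_nonneg d : (0 : ℝ) ≤ d)]
        calc ‖z‖ ^ r = 2 ^ (-r) * (2 * ‖z‖) ^ r := by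
              rw [Real.mul_rpow zero_le_two hz0.le, ← mul_assoc, ← Real.rpow_add two_pos,
                neg_add_cancel, Real.rpow_zero, one_mul]
          _ ≤ 2 ^ (-r) * (1 + ‖z‖) ^ r := by
              gcongr ?_ * ?_
              exact Real.rpow_le_rpow_of_nonpos (by positivity) (by linarith) hr0
    _ ≤ ENNReal.ofReal (2 ^ (-r)) * ∫⁻ z, ENNReal.ofReal ((1 + ‖z‖) ^ r) ∂μ := by
        rw [← lintegral_const_mul' _ _ ENNReal.ofReal_ne_top]
        exact setLIntegral_le_lintegral _ _
    _ < ∞ := ENNReal.mul_lt_top ENNReal.ofReal_lt_top hfin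

theorem setLIntegral_ball_enorm_rpow (r : ℝ) {N : ℝ} (hN : 0 < N) :
    ∫⁻ z in ball (0 : E) N, ‖z‖ₑ ^ r ∂μ =
      ENNReal.ofReal (N ^ (d + r)) * ∫⁻ z in ball (0 : E) 1, ‖z‖ₑ ^ r ∂μ := by
  rw [← smul_unitBall_of_pos hN, setLIntegral_smul_set_enorm_rpow μ measurableSet_ball r hN]

theorem setLIntegral_compl_ball_enorm_rpow (r : ℝ) {N : ℝ} (hN : 0 < N) :
    ∫⁻ z in (ball (0 : E) N)ᶜ, ‖z‖ₑ ^ r ∂μ =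
      ENNReal.ofReal (N ^ (d + r)) * ∫⁻ z in (ball (0 : E) 1)ᶜ, ‖z‖ₑ ^ r ∂μ := by
  have hcompl : (N • ball (0 : E) 1)ᶜ = N • (ball (0 : E) 1)ᶜ :=
    (image_compl_eq (MulAction.bijective₀ hN.ne')).symm
  rw [← smul_unitBall_of_pos hN, hcompl,
    setLIntegral_smul_set_enorm_rpow μ measurableSet_ball.compl r hN]

theorem setLIntegral_closedBall_enorm_rpow_le {r : ℝ} (hr : r ≤ 0) (x₀ : E) {N : ℝ} (hN : 0 < N) :
    ∫⁻ y in closedBall x₀ N, ‖y‖ₑ ^ r ∂μ ≤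
      ENNReal.ofReal (N ^ (d + r)) * (∫⁻ z in ball (0 : E) 1, ‖z‖ₑ ^ r ∂μ + μ (ball 0 1)) := by
  have hpoint : ∀ y : E, ‖y‖ₑ ^ r ≤ (ball 0 N).indicator (‖·‖ₑ ^ r) y + ENNReal.ofReal (N ^ r) := by
    intro y
    by_cases hy : y ∈ ball (0 : E) N
    · rw [indicator_of_mem hy]
      exact le_self_add
    · have hNy : N ≤ ‖y‖ := by simpa using hy
      rw [enorm_rpow_eq_ofReal_norm_rpow (norm_pos_iff.1 (hN.trans_le hNy))]
      exact (ENNReal.ofReal_le_ofReal (Real.rpow_le_rpow_of_nonpos hN hNy hr)).trans le_add_self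
  calc ∫⁻ y in closedBall x₀ N, ‖y‖ₑ ^ r ∂μ
      ≤ ∫⁻ y in closedBall x₀ N, (ball 0 N).indicator (‖·‖ₑ ^ r) y + ENNReal.ofReal (N ^ r) ∂μ :=
        lintegral_mono fun y => hpoint y
    _ ≤ ∫⁻ y in ball (0 : E) N, ‖y‖ₑ ^ r ∂μ + ENNReal.ofReal (N ^ r) * μ (closedBall x₀ N) := by
        rw [lintegral_add_right _ measurable_const, setLIntegral_const, mul_comm,
          ← lintegral_indicator measurableSet_ball]
        exact add_le_add (setLIntegral_le_lintegral _ _) le_rfl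
    _ = ENNReal.ofReal (N ^ (d + r)) * (∫⁻ z in ball (0 : E) 1, ‖z‖ₑ ^ r ∂μ + μ (ball 0 1)) := by
        rw [setLIntegral_ball_enorm_rpow μ r hN, Measure.addHaar_closedBall μ x₀ hN.le, mul_add,
          ← mul_assoc, ← ENNReal.ofReal_mul (by positivity), ← Real.rpow_natCast,
          ← Real.rpow_add hN, add_comm r]

theorem setLIntegral_ball_enorm_rpow_lt_top [Nontrivial E] {r : ℝ} (hr : -(d : ℝ) < r) :
    ∫⁻ z in ball (0 : E) 1, ‖z‖ₑ ^ r ∂μ < ∞ := by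
  have hint : IntegrableOn (fun z : E => ‖z‖ ^ r) (ball 0 1) μ :=
    integrableOn_ball_of_norm_le_rpow Module.finrank_pos (C := 1) (α := -r) (by linarith)
      (ae_restrict_of_ae <| (μ.ae_ne 0).mono fun z hz => by
        simp [Real.norm_of_nonneg (Real.rpow_nonneg (norm_nonneg z) r)])
      (measurable_norm.pow_const r).aestronglyMeasurable
  refine lt_of_eq_of_lt (setLIntegral_congr_fun_ae measurableSet_ball ?_) hint.2
  filter_upwards [μ.ae_ne 0] with z hz _
  rw [enorm_rpow_eq_ofReal_norm_rpow hz, Real.enorm_of_nonneg (by positivity)]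

theorem eLpNorm_indicator_rpow_lconvolution_rpow_le_mul {β γ : ℝ} (hβ : 0 ≤ β) (x₀ : E)
    {N : ℝ} (hN : 0 < N) :
    eLpNorm ((closedBall x₀ N).indicator (fun y => ‖y‖ₑ ^ (-β)) ⋆ₗ[μ] fun z => ‖z‖ₑ ^ (-γ)) 2 μ ≤
      ((∫⁻ z in ball (0 : E) 1, ‖z‖ₑ ^ (-γ) ∂μ) *
          (∫⁻ z in ball (0 : E) 1, ‖z‖ₑ ^ (2 * -β) ∂μ + μ (ball 0 1)) ^ (1 / 2 : ℝ) +
        (∫⁻ z in ball (0 : E) 1, ‖z‖ₑ ^ (-β) ∂μ + μ (ball 0 1)) *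
          (∫⁻ z in (ball (0 : E) 1)ᶜ, ‖z‖ₑ ^ (2 * -γ) ∂μ) ^ (1 / 2 : ℝ)) *
        ENNReal.ofReal (N ^ (3 * d / 2 - β - γ)) := by
  set A₁ := ∫⁻ z in ball (0 : E) 1, ‖z‖ₑ ^ (-γ) ∂μ
  set A₂ := ∫⁻ z in (ball (0 : E) 1)ᶜ, ‖z‖ₑ ^ (2 * -γ) ∂μ
  set B₁ := ∫⁻ z in ball (0 : E) 1, ‖z‖ₑ ^ (-β) ∂μ + μ (ball 0 1)
  set B₂ := ∫⁻ z in ball (0 : E) 1, ‖z‖ₑ ^ (2 * -β) ∂μ + μ (ball 0 1)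
  have hmul (a b : ℝ) :
      ENNReal.ofReal (N ^ a) * ENNReal.ofReal (N ^ b) = ENNReal.ofReal (N ^ (a + b)) := by
    rw [← ENNReal.ofReal_mul (by positivity), Real.rpow_add hN]
  have hW : Measurable ((closedBall x₀ N).indicator fun y : E => ‖y‖ₑ ^ (-β)) :=
    (by fun_prop : Measurable fun y : E => ‖y‖ₑ ^ (-β)).indicator measurableSet_closedBall
  calc _ ≤ _ := eLpNorm_two_lconvolution_le_split hW (by fun_prop) measurableSet_ball
    _ ≤ ENNReal.ofReal (N ^ (d + -γ)) * A₁ *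
            (ENNReal.ofReal (N ^ ((d + 2 * -β) / 2)) * B₂ ^ (1 / 2 : ℝ)) +
          ENNReal.ofReal (N ^ (d + -β)) * B₁ *
            (ENNReal.ofReal (N ^ ((d + 2 * -γ) / 2)) * A₂ ^ (1 / 2 : ℝ)) := by
        rw [setLIntegral_ball_enorm_rpow μ _ hN, lintegral_indicator measurableSet_closedBall]
        gcongr
        · exact eLpNorm_two_indicator_enorm_rpow_le measurableSet_closedBall hN.le
            (setLIntegral_closedBall_enorm_rpow_le μ (by linarith) x₀ hN)
        · exact setLIntegral_closedBall_enorm_rpow_le μ (by linarith) x₀ hN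
        · exact eLpNorm_two_indicator_enorm_rpow_le measurableSet_ball.compl hN.le
            (setLIntegral_compl_ball_enorm_rpow μ _ hN).le
    _ = (A₁ * B₂ ^ (1 / 2 : ℝ) + B₁ * A₂ ^ (1 / 2 : ℝ)) *
          ENNReal.ofReal (N ^ (3 * d / 2 - β - γ)) := by
        rw [add_mul]
        congr 1
        · rw [show 3 * d / 2 - β - γ = (d + -γ) + (d + 2 * -β) / 2 by ring, ← hmul (d + -γ)]
          ring
        · rw [show 3 * d / 2 - β - γ = (d + -β) + (d + 2 * -γ) / 2 by ring, ← hmul (d + -β)]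
          ring

theorem eLpNorm_indicator_rpow_lconvolution_rpow_le {β γ : ℝ} (hβ : 0 ≤ β)
    (hβd : 2 * β < d) (hγd : d < 2 * γ) (hγ : γ < d) :
    ∃ C > 0, ∀ (x₀ : E) {N : ℝ}, 0 < N →
      eLpNorm ((closedBall x₀ N).indicator (fun y => ‖y‖ₑ ^ (-β)) ⋆ₗ[μ] fun z => ‖z‖ₑ ^ (-γ)) 2 μ
        ≤ ENNReal.ofReal (C * N ^ (3 * d / 2 - β - γ)) := by
  have : Nontrivial E := Module.nontrivial_of_finrank_pos (R := ℝ) (by exact_mod_cast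
    (by linarith : (0 : ℝ) < d))
  have hA₁ := setLIntegral_ball_enorm_rpow_lt_top μ (r := -γ) (by linarith)
  have hA₂ := setLIntegral_compl_ball_enorm_rpow_lt_top μ (r := 2 * -γ) (by linarith)
  have hB₁ := setLIntegral_ball_enorm_rpow_lt_top μ (r := -β) (by linarith)
  have hB₂ := setLIntegral_ball_enorm_rpow_lt_top μ (r := 2 * -β) (by linarith)
  have hV : μ (ball (0 : E) 1) < ∞ := measure_ball_lt_top
  set C := (∫⁻ z in ball (0 : E) 1, ‖z‖ₑ ^ (-γ) ∂μ) *
      (∫⁻ z in ball (0 : E) 1, ‖z‖ₑ ^ (2 * -β) ∂μ + μ (ball 0 1)) ^ (1 / 2 : ℝ) +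
    (∫⁻ z in ball (0 : E) 1, ‖z‖ₑ ^ (-β) ∂μ + μ (ball 0 1)) *
      (∫⁻ z in (ball (0 : E) 1)ᶜ, ‖z‖ₑ ^ (2 * -γ) ∂μ) ^ (1 / 2 : ℝ)
  have hC : C ≠ ∞ := by finiteness
  refine ⟨C.toReal + 1, by positivity, fun x₀ N hN =>
    (eLpNorm_indicator_rpow_lconvolution_rpow_le_mul μ hβ x₀ hN).trans ?_⟩
  rw [ENNReal.ofReal_mul (by positivity)]
  gcongr
  exact (ENNReal.le_ofReal_iff_toReal_le hC (by positivity)).2 (le_add_of_nonneg_right zero_le_one)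

end Scaling

end MeasureTheory


theorem conv_op_bump_L2_bound_general (n : ℕ) (hn : 4 ≤ n) (α : ℝ) (hα1 : 1 < α)
    (hα2 : α < 2) (Ck : ℝ) (hCk : 0 < Ck) :
    ∃ C' > 0, ∀ (k h ζ : EuclideanSpace ℝ (Fin n) → ℝ) (K Cζ N : ℝ)
      (x₀ : EuclideanSpace ℝ (Fin n)),
      0 ≤ K → 0 ≤ Cζ → 0 < N →
      (∀ z : EuclideanSpace ℝ (Fin n), z ≠ 0 →
        |k z| ≤ Ck * ‖z‖ ^ (-((n : ℝ) - α + 1))) →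
      (∀ x : EuclideanSpace ℝ (Fin n), x ≠ 0 → |h x| ≤ K * ‖x‖ ^ (1 - α)) →
      (∀ x, |ζ x| ≤ Cζ) →
      (∀ x : EuclideanSpace ℝ (Fin n), ζ x ≠ 0 → ‖x - x₀‖ ≤ N) →
      eLpNorm (fun x : EuclideanSpace ℝ (Fin n) =>
          ∫ y, k (x - y) * (h y * ζ y)) 2 volume
        ≤ ENNReal.ofReal (C' * K * Cζ * N ^ ((n : ℝ) / 2)) := by
  have hnR : (4 : ℝ) ≤ n := by exact_mod_cast hn
  have : NeZero n := ⟨by omega⟩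
  obtain ⟨C, hC, hbound⟩ := eLpNorm_indicator_rpow_lconvolution_rpow_le
    (volume : Measure (EuclideanSpace ℝ (Fin n))) (β := α - 1) (γ := n - α + 1)
    (by linarith) (by rw [finrank_euclideanSpace_fin]; linarith)
    (by rw [finrank_euclideanSpace_fin]; linarith) (by rw [finrank_euclideanSpace_fin]; linarith)
  refine ⟨Ck * C, by positivity, fun k h ζ K Cζ N x₀ hK hCζ hN hk hh hζ hsupp => ?_⟩
  have hdensity : ∀ y ≠ 0, ‖h y * ζ y‖ₑ ≤ ENNReal.ofReal (K * Cζ) *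
      (closedBall x₀ N).indicator (fun y => ‖y‖ₑ ^ (-(α - 1))) y := fun y hy => by
    by_cases hζy : ζ y = 0
    · simp [hζy]
    rw [indicator_of_mem (mem_closedBall_iff_norm.2 (hsupp y hζy))]
    refine enorm_le_ofReal_mul_enorm_rpow hy ?_
    calc |h y * ζ y| ≤ K * ‖y‖ ^ (1 - α) * Cζ := by
          rw [abs_mul]; exact mul_le_mul (hh y hy) (hζ y) (abs_nonneg _) (by positivity)
      _ = K * Cζ * ‖y‖ ^ (-(α - 1)) := by rw [neg_sub]; ring
  calc _ ≤ ENNReal.ofReal Ck * ENNReal.ofReal (K * Cζ) * eLpNorm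
          ((closedBall x₀ N).indicator (fun y => ‖y‖ₑ ^ (-(α - 1))) ⋆ₗ
            fun z => ‖z‖ₑ ^ (-((n : ℝ) - α + 1))) 2 volume :=
        eLpNorm_integral_mul_le_lconvolution (by fun_prop) ((by fun_prop : Measurable fun y :
          EuclideanSpace ℝ (Fin n) => ‖y‖ₑ ^ (-(α - 1))).indicator measurableSet_closedBall)
          (fun z hz => enorm_le_ofReal_mul_enorm_rpow hz (hk z hz)) hdensity 2
    _ ≤ ENNReal.ofReal Ck * ENNReal.ofReal (K * Cζ) * ENNReal.ofReal (C * N ^ ((n : ℝ) / 2)) := by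
        grw [hbound x₀ hN, finrank_euclideanSpace_fin,
          show 3 * (n : ℝ) / 2 - (α - 1) - (n - α + 1) = n / 2 by ring]
    _ = ENNReal.ofReal (Ck * C * K * Cζ * N ^ ((n : ℝ) / 2)) := by
        rw [← ENNReal.ofReal_mul hCk.le, ← ENNReal.ofReal_mul (by positivity)]
        ring_nf

/-- Let `1 < α < 2`, `n ≥ 4`, `α < n - 2`. If `|h(x)| ≤ K|x|^{1-α}` for `x ≠ 0`,
`T` is convolution with a kernel bounded by `Ck |x|^{-(n-α+1)}`, and `ζ` is an
`L^∞` function supported in a ball of radius `N`, then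
`‖T(hζ)‖_{L²} ≤ C' K ‖ζ‖_{L^∞} N^{n/2}`. -/
theorem conv_op_bump_L2_bound (n : ℕ) (hn : 4 ≤ n) (α : ℝ) (hα1 : 1 < α)
    (hα2 : α < 2) (hαn : α < (n : ℝ) - 2) (Ck : ℝ) (hCk : 0 < Ck) :
    ∃ C' > 0, ∀ (k h ζ : EuclideanSpace ℝ (Fin n) → ℝ) (K Cζ N : ℝ)
      (x₀ : EuclideanSpace ℝ (Fin n)),
      0 ≤ K → 0 ≤ Cζ → 0 < N →
      (∀ z : EuclideanSpace ℝ (Fin n), z ≠ 0 →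
        |k z| ≤ Ck * ‖z‖ ^ (-((n : ℝ) - α + 1))) →
      (∀ x : EuclideanSpace ℝ (Fin n), x ≠ 0 → |h x| ≤ K * ‖x‖ ^ (1 - α)) →
      (∀ x, |ζ x| ≤ Cζ) →
      (∀ x : EuclideanSpace ℝ (Fin n), ζ x ≠ 0 → ‖x - x₀‖ ≤ N) →
      eLpNorm (fun x : EuclideanSpace ℝ (Fin n) =>
          ∫ y, k (x - y) * (h y * ζ y)) 2 volume
        ≤ ENNReal.ofReal (C' * K * Cζ * N ^ ((n : ℝ) / 2)) :=
  conv_op_bump_L2_bound_general n hn α hα1 hα2 Ck hCk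
end

section
/- Suppose m : [0,T) → [0,∞) is continuously differentiable, m(t) > 0 implies m'(t) ≤ F(t)√(m(t)) for a continuous nonnegative function F. Then √(m(t)) ≤ √(m(0)) + (1/2)∫₀^t F(t') dt' for all t ∈ [0,T). -/
open MeasureTheory intervalIntegral

/-!
Away from the zeros of `m` the hypothesis says `(√m)' = m' / (2√m) ≤ F / 2`, and integrating gives
the claim. To avoid the singularity of the square root at `0`, run this argument for `√(m + ε)`,
which is differentiable everywhere, and let `ε → 0`. At a zero of `m` in the interior, `m` has a
local minimum, so `m' = 0` there and the differential inequality still holds.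
-/

open Filter Set Topology

theorem hasDerivAt_le_mul_sqrt_of_eventually_nonneg {m : ℝ → ℝ} {d c x : ℝ}
    (hnonneg : ∀ᶠ y in 𝓝 x, 0 ≤ m y) (hd : HasDerivAt m d x)
    (hpos : 0 < m x → d ≤ c * √(m x)) : d ≤ c * √(m x) := by
  rcases hnonneg.self_of_nhds.lt_or_eq with hmx | hmx
  · exact hpos hmx
  · have hmin : IsLocalMin m x := hnonneg.mono fun y hy => hmx ▸ hy
    rw [hmin.hasDerivAt_eq_zero hd, ← hmx, Real.sqrt_zero, mul_zero]

theorem div_two_sqrt_add_le {a d c ε : ℝ} (ha : 0 ≤ a) (hε : 0 < ε) (hc : 0 ≤ c)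
    (hd : d ≤ c * √a) : d / (2 * √(a + ε)) ≤ 1 / 2 * c := by
  have hsqrt : 0 < √(a + ε) := Real.sqrt_pos.mpr (by linarith)
  rw [div_le_iff₀ (by positivity)]
  calc d ≤ c * √a := hd
    _ ≤ c * √(a + ε) := by gcongr; linarith
    _ = 1 / 2 * c * (2 * √(a + ε)) := by ring

theorem sqrt_add_sub_sqrt_add_le_integral {m m' F : ℝ → ℝ} {a b ε : ℝ} (hab : a ≤ b)
    (hε : 0 < ε) (hm0 : ∀ x ∈ Icc a b, 0 ≤ m x)
    (hderiv : ∀ x ∈ Icc a b, HasDerivAt m (m' x) x)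
    (hle : ∀ x ∈ Ioo a b, m' x ≤ F x * √(m x))
    (hF : IntegrableOn F (Icc a b)) (hF0 : ∀ x ∈ Ioo a b, 0 ≤ F x) :
    √(m b + ε) - √(m a + ε) ≤ 1 / 2 * ∫ x in a..b, F x := by
  have hsqrt : ∀ x ∈ Icc a b,
      HasDerivAt (fun y => √(m y + ε)) (m' x / (2 * √(m x + ε))) x := fun x hx =>
    ((hderiv x hx).add_const ε).sqrt (by linarith [hm0 x hx])
  rw [← intervalIntegral.integral_const_mul]
  refine sub_le_integral_of_hasDeriv_right_of_le hab
    (fun x hx => (hsqrt x hx).continuousAt.continuousWithinAt)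
    (fun x hx => (hsqrt x (Ioo_subset_Icc_self hx)).hasDerivWithinAt)
    (hF.const_mul _) fun x hx => ?_
  exact div_two_sqrt_add_le (hm0 x (Ioo_subset_Icc_self hx)) hε (hF0 x hx) (hle x hx)

theorem sqrt_le_sqrt_add_of_forall_pos {p q c : ℝ} (hq : 0 ≤ q)
    (h : ∀ ε > 0, √(p + ε) - √(q + ε) ≤ c) : √p ≤ √q + c := by
  refine le_of_forall_pos_le_add fun δ hδ => ?_
  have hq' : √(q + δ ^ 2) ≤ √q + δ := by
    rw [Real.sqrt_le_iff]
    refine ⟨by positivity, ?_⟩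
    nlinarith [Real.sq_sqrt hq, Real.sqrt_nonneg q]
  calc √p ≤ √(p + δ ^ 2) := Real.sqrt_le_sqrt (by nlinarith)
    _ ≤ √(q + δ ^ 2) + c := by linarith [h (δ ^ 2) (by positivity)]
    _ ≤ √q + c + δ := by linarith

theorem sqrt_gronwall_general (T : ℝ) (m m' F : ℝ → ℝ)
    (hm0 : ∀ t ∈ Set.Ico (0 : ℝ) T, 0 ≤ m t)
    (hderiv : ∀ t ∈ Set.Ico (0 : ℝ) T, HasDerivAt m (m' t) t)
    (hFcont : Continuous F) (hF0 : ∀ t, 0 ≤ F t)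
    (hineq : ∀ t ∈ Set.Ico (0 : ℝ) T, 0 < m t → m' t ≤ F t * Real.sqrt (m t)) :
    ∀ t ∈ Set.Ico (0 : ℝ) T,
      Real.sqrt (m t) ≤ Real.sqrt (m 0) + (1 / 2) * ∫ s in (0:ℝ)..t, F s := by
  intro t ⟨ht0, htT⟩
  have hsub : Icc 0 t ⊆ Ico 0 T := Icc_subset_Ico_right htT
  have hle : ∀ x ∈ Ioo 0 t, m' x ≤ F x * √(m x) := fun x hx => by
    have hxT : x ∈ Ico 0 T := hsub (Ioo_subset_Icc_self hx)
    refine hasDerivAt_le_mul_sqrt_of_eventually_nonneg ?_ (hderiv x hxT) (hineq x hxT)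
    filter_upwards [Ioo_mem_nhds hx.1 (hx.2.trans htT)] with y hy using hm0 y (Ioo_subset_Ico_self hy)
  refine sqrt_le_sqrt_add_of_forall_pos (hm0 0 ⟨le_rfl, ht0.trans_lt htT⟩) fun ε hε => ?_
  exact sqrt_add_sub_sqrt_add_le_integral ht0 hε (fun x hx => hm0 x (hsub hx))
    (fun x hx => hderiv x (hsub hx)) hle hFcont.integrableOn_Icc fun x _ => hF0 x

/-- Gronwall-type ODE lemma: if `m : [0,T) → [0,∞)` is `C¹` and
`m(t) > 0 → m'(t) ≤ F(t)√(m(t))` for a continuous nonnegative `F`, then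
`√(m(t)) ≤ √(m(0)) + (1/2)∫₀ᵗ F` on `[0,T)`. -/
theorem sqrt_gronwall (T : ℝ) (hT : 0 < T) (m m' F : ℝ → ℝ)
    (hm0 : ∀ t ∈ Set.Ico (0 : ℝ) T, 0 ≤ m t)
    (hderiv : ∀ t ∈ Set.Ico (0 : ℝ) T, HasDerivAt m (m' t) t)
    (hm'cont : ContinuousOn m' (Set.Ico (0 : ℝ) T))
    (hFcont : Continuous F) (hF0 : ∀ t, 0 ≤ F t)
    (hineq : ∀ t ∈ Set.Ico (0 : ℝ) T, 0 < m t → m' t ≤ F t * Real.sqrt (m t)) :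
    ∀ t ∈ Set.Ico (0 : ℝ) T,
      Real.sqrt (m t) ≤ Real.sqrt (m 0) + (1 / 2) * ∫ s in (0:ℝ)..t, F s :=
  sqrt_gronwall_general T m m' F hm0 hderiv hFcont hF0 hineq
end
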